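/- arXiv:2407.01353 — 3 statements merged into one kernel-verified Lean document; each statement's English description precedes it below -/
import Mathlib

section
/- Let P be a polytope in R^n (n ≥ 1) with nonempty interior such that P is a pyramid over each of its facets (i.e., for every facet F of P, the vertex set of P not contained in F consists of exactly one point). Then P is a simplex, i.e., P has exactly n+1 vertices which are affinely independent. -/
/-!
Every vertex `v` of `P` is avoided by some facet: separate `v` from the other points of `s` by a
supporting hyperplane, then keep rotating that hyperplane about the affine span of its face and
`v` until the face has dimension `n - 1`. As `P` is a pyramid over this facet, all vertices other
than `v` lie on it, so `v` is not in their affine span. Hence the vertices are affinely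
independent, and since they span `ℝⁿ` there are exactly `n + 1` of them.
-/

open Module

section Affine

variable {k V P : Type*} [AddCommGroup V] [AddTorsor V P]

theorem AffineMap.eq_of_mem_affineSpan [Ring k] [Module k V] {V₂ P₂ : Type*} [AddCommGroup V₂]
    [Module k V₂] [AddTorsor V₂ P₂] (f : P →ᵃ[k] P₂) {s : Set P} {q : P₂}
    (hs : ∀ x ∈ s, f x = q) {x : P} (hx : x ∈ affineSpan k s) : f x = q := by
  have hfx : f x ∈ affineSpan k (f '' s) :=
    AffineSubspace.map_span f s ▸ AffineSubspace.mem_map_of_mem f hx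
  have hle : affineSpan k (f '' s) ≤ affineSpan k {q} :=
    affineSpan_mono k (Set.image_subset_iff.2 hs)
  exact (AffineSubspace.mem_affineSpan_singleton k V₂).1 (hle hfx)

theorem affineIndependent_of_forall_notMem_affineSpan_sdiff [DivisionRing k] [Module k V]
    {s : Set P} (h : ∀ v ∈ s, v ∉ affineSpan k (s \ {v})) :
    AffineIndependent k ((↑) : s → P) := by
  obtain ⟨t, hts, hspan, hind⟩ := exists_affineIndependent k V s
  have hst : s ⊆ t := fun v hv => by
    by_contra hvt
    exact h v hv (affineSpan_mono k (Set.subset_sdiff_singleton hts hvt)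
      (hspan ▸ mem_affineSpan k hv))
  rwa [hts.antisymm hst] at hind

end Affine

section LinearAlgebra

variable {𝕜 V : Type*} [Field 𝕜] [AddCommGroup V] [Module 𝕜 V]

theorem AffineSubspace.exists_linearMap_eq_add_one_of_notMem {A : AffineSubspace 𝕜 V} {v w : V}
    (hv : v ∈ A) (hw : w ∉ A) :
    ∃ φ : V →ₗ[𝕜] 𝕜, (∀ x ∈ A, φ x = φ v) ∧ φ w = φ v + 1 := by
  have hwv : w -ᵥ v ∉ A.direction := fun h =>
    hw ((AffineSubspace.vsub_right_mem_direction_iff_mem hv w).1 h)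
  obtain ⟨f, hfwv, hAf⟩ := Submodule.exists_le_ker_of_notMem hwv
  refine ⟨(f (w - v))⁻¹ • f, fun x hx => ?_, ?_⟩
  · have : f (x - v) = 0 := hAf (A.vsub_mem_direction hx hv)
    simp only [LinearMap.smul_apply, smul_eq_mul, map_sub, sub_eq_zero] at this ⊢
    rw [this]
  · have : (f (w - v))⁻¹ * f (w - v) = 1 := inv_mul_cancel₀ hfwv
    simp only [LinearMap.smul_apply, smul_eq_mul, map_sub] at this ⊢
    linear_combination this

theorem finrank_vectorSpan_lt_of_forall_eq [FiniteDimensional 𝕜 V] {s : Set V}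
    {l : V →ₗ[𝕜] 𝕜} {c : 𝕜} (hs : ∀ x ∈ s, l x = c) (hl : l ≠ 0) :
    finrank 𝕜 (vectorSpan 𝕜 s) < finrank 𝕜 V := by
  have hle : vectorSpan 𝕜 s ≤ LinearMap.ker l := by
    rw [vectorSpan_def, Submodule.span_le]
    rintro _ ⟨a, ha, b, hb, rfl⟩
    simp [hs a ha, hs b hb]
  exact Submodule.finrank_lt (ne_top_of_le_ne_top (LinearMap.ker_eq_top.not.2 hl) hle)

theorem finrank_vectorSpan_lt_of_subset_of_notMem [FiniteDimensional 𝕜 V] {s t : Set V}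
    (hst : s ⊆ t) (hs : s.Nonempty) {u : V} (hut : u ∈ t) (hus : u ∉ affineSpan 𝕜 s) :
    finrank 𝕜 (vectorSpan 𝕜 s) < finrank 𝕜 (vectorSpan 𝕜 t) := by
  have hlt : affineSpan 𝕜 s < affineSpan 𝕜 t :=
    (affineSpan_mono 𝕜 hst).lt_of_ne fun h => hus (h ▸ subset_affineSpan 𝕜 t hut)
  have := AffineSubspace.direction_lt_of_nonempty hlt (hs.mono (subset_affineSpan 𝕜 s))
  rw [direction_affineSpan, direction_affineSpan] at this
  exact Submodule.finrank_lt_finrank_of_lt this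

end LinearAlgebra

section OrderedField

variable {𝕜 V : Type*} [Field 𝕜] [LinearOrder 𝕜] [IsStrictOrderedRing 𝕜] [AddCommGroup V]
  [Module 𝕜 V]

theorem convexHull_inter_eq_convexHull_filter {s : Finset V} {l : V →ₗ[𝕜] 𝕜} {c : 𝕜}
    (hle : ∀ u ∈ s, l u ≤ c) :
    convexHull 𝕜 ↑s ∩ {x | l x = c} = convexHull 𝕜 ↑(s.filter (l · = c)) := by
  refine Set.Subset.antisymm ?_
    (Set.subset_inter (convexHull_mono (Finset.coe_subset.2 (Finset.filter_subset _ _))) ?_)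
  · rintro x ⟨hx, hxc : l x = c⟩
    obtain ⟨w, hw₀, hw₁, rfl⟩ := Finset.mem_convexHull'.1 hx
    -- the weights average `c - l u ≥ 0` to `0`, so they vanish off the hyperplane
    have hgap : ∑ u ∈ s, w u * (c - l u) = 0 := by
      simp only [map_sum, map_smul, smul_eq_mul] at hxc
      simp only [mul_sub, Finset.sum_sub_distrib, ← Finset.sum_mul, hw₁, hxc]
      ring
    have hon : ∀ u ∈ s, w u ≠ 0 → l u = c := fun u hu hwu => by
      have := (Finset.sum_eq_zero_iff_of_nonneg fun u hu =>
        mul_nonneg (hw₀ u hu) (sub_nonneg.2 (hle u hu))).1 hgap u hu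
      linarith [(mul_eq_zero.1 this).resolve_left hwu]
    refine Finset.mem_convexHull'.2 ⟨w, fun u hu => hw₀ u (Finset.mem_filter.1 hu).1, ?_, ?_⟩
    · rwa [Finset.sum_filter_of_ne hon]
    · exact Finset.sum_filter_of_ne fun u hu h => hon u hu fun h0 => h (by simp [h0])
  · exact convexHull_min (fun u hu => (Finset.mem_filter.1 hu).2)
      (convex_hyperplane l.isLinear c)

/-- The hyperplane `l + t • φ = c + t * c₀` is `l = c` rotated about its intersection with
`φ = c₀`; the smallest `t` at which it meets a new point of `s` keeps `s` on one side. -/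
theorem Finset.exists_tilt {s : Finset V} {l φ : V →ₗ[𝕜] 𝕜} {c c₀ : 𝕜}
    (hle : ∀ u ∈ s, l u ≤ c) (hφ : ∀ u ∈ s, l u = c → φ u = c₀) {w : V} (hw : w ∈ s)
    (hφw : c₀ < φ w) :
    ∃ t > 0, (∀ u ∈ s, l u + t * φ u ≤ c + t * c₀) ∧
      ∃ u ∈ s, c₀ < φ u ∧ l u + t * φ u = c + t * c₀ := by
  set T := s.filter (c₀ < φ ·)
  have hT : ∀ u ∈ T, u ∈ s ∧ l u < c ∧ c₀ < φ u := fun u hu => by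
    obtain ⟨hu, hφu⟩ := Finset.mem_filter.1 hu
    exact ⟨hu, (hle u hu).lt_of_ne fun h => hφu.ne' (hφ u hu h), hφu⟩
  obtain ⟨u, huT, hu⟩ := T.exists_min_image (fun u => (c - l u) / (φ u - c₀))
    ⟨w, Finset.mem_filter.2 ⟨hw, hφw⟩⟩
  obtain ⟨hus, hlu, hφu⟩ := hT u huT
  refine ⟨(c - l u) / (φ u - c₀), div_pos (sub_pos.2 hlu) (sub_pos.2 hφu), fun y hy => ?_,
    u, hus, hφu, ?_⟩
  · rcases le_or_gt (φ y) c₀ with hφy | hφy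
    · nlinarith [hle y hy, div_pos (sub_pos.2 hlu) (sub_pos.2 hφu)]
    · have := hu y (Finset.mem_filter.2 ⟨hy, hφy⟩)
      linarith [(le_div_iff₀ (sub_pos.2 hφy)).1 this]
  · field_simp
    ring

theorem Finset.exists_isMaxOn_finrank_vectorSpan_filter_lt [FiniteDimensional 𝕜 V]
    {s : Finset V} (hs : affineSpan 𝕜 (s : Set V) = ⊤) {l : V →ₗ[𝕜] 𝕜} {u₀ v : V} (hu₀ : u₀ ∈ s)
    (hmax : IsMaxOn l s u₀) (hv : l v < l u₀)
    (hdim : finrank 𝕜 (vectorSpan 𝕜 (s.filter (l · = l u₀) : Set V)) + 2 ≤ finrank 𝕜 V) :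
    ∃ l' : V →ₗ[𝕜] 𝕜, IsMaxOn l' s u₀ ∧ l' v < l' u₀ ∧
      finrank 𝕜 (vectorSpan 𝕜 (s.filter (l · = l u₀) : Set V)) <
        finrank 𝕜 (vectorSpan 𝕜 (s.filter (l' · = l' u₀) : Set V)) := by
  set F := s.filter (l · = l u₀)
  have hu₀F : u₀ ∈ F := Finset.mem_filter.2 ⟨hu₀, rfl⟩
  set A := affineSpan 𝕜 (insert v (F : Set V))
  have hFA : affineSpan 𝕜 (F : Set V) ≤ A := affineSpan_mono 𝕜 (Set.subset_insert _ _)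
  have hA : A ≠ ⊤ := fun h => by
    have : finrank 𝕜 A.direction ≤ finrank 𝕜 (vectorSpan 𝕜 (F : Set V)) + 1 := by
      rw [direction_affineSpan]
      exact finrank_vectorSpan_insert_le_set 𝕜 (F : Set V) v
    rw [h, AffineSubspace.direction_top, finrank_top] at this
    omega
  obtain ⟨w, hws, hwA⟩ : ∃ w ∈ s, w ∉ A := by
    by_contra! h
    exact hA (top_le_iff.1 (hs ▸ affineSpan_le.2 h))
  obtain ⟨φ, hφA, hφw⟩ := AffineSubspace.exists_linearMap_eq_add_one_of_notMem
    (mem_affineSpan 𝕜 (Set.mem_insert v _)) hwA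
  have hφF : ∀ u ∈ F, φ u = φ v := fun u hu => hφA u (hFA (subset_affineSpan 𝕜 _ hu))
  obtain ⟨t, ht, hbound, u, hus, hφu, hu⟩ := Finset.exists_tilt (isMaxOn_iff.1 hmax)
    (fun u hu h => hφF u (Finset.mem_filter.2 ⟨hu, h⟩)) hws (hφw ▸ lt_add_one (φ v))
  have hl' : ∀ x, (l + t • φ) x = l x + t * φ x := fun x => rfl
  refine ⟨l + t • φ, isMaxOn_iff.2 fun y hy => ?_, ?_, ?_⟩
  · simp only [hl', hφF u₀ hu₀F, hbound y hy]
  · rw [hl', hl', hφF u₀ hu₀F]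
    linarith
  · refine finrank_vectorSpan_lt_of_subset_of_notMem (u := u) (fun x hx => ?_) ⟨u₀, hu₀F⟩ ?_ ?_
    · obtain ⟨hxs, hx⟩ := Finset.mem_filter.1 hx
      simp [hxs, hl', hx, hφF x (Finset.mem_filter.2 ⟨hxs, hx⟩), hφF u₀ hu₀F]
    · simp [hus, hl', hu, hφF u₀ hu₀F]
    · exact fun h => hφu.ne' (hφA u (hFA h))

theorem Finset.exists_isMaxOn_finrank_vectorSpan_filter_add_one_eq [FiniteDimensional 𝕜 V]
    {s : Finset V} (hs : affineSpan 𝕜 (s : Set V) = ⊤) {l : V →ₗ[𝕜] 𝕜} {u₀ v : V} (hu₀ : u₀ ∈ s)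
    (hmax : IsMaxOn l s u₀) (hv : l v < l u₀) :
    ∃ l' : V →ₗ[𝕜] 𝕜, IsMaxOn l' s u₀ ∧ l' v < l' u₀ ∧
      finrank 𝕜 (vectorSpan 𝕜 (s.filter (l' · = l' u₀) : Set V)) + 1 = finrank 𝕜 V := by
  let rank (l : V →ₗ[𝕜] 𝕜) := finrank 𝕜 (vectorSpan 𝕜 (s.filter (l · = l u₀) : Set V))
  have hlt : ∀ l : V →ₗ[𝕜] 𝕜, l v < l u₀ → rank l < finrank 𝕜 V := fun l hl =>
    finrank_vectorSpan_lt_of_forall_eq (c := l u₀) (fun x hx => (Finset.mem_filter.1 hx).2)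
      (by rintro rfl; simp at hl)
  obtain ⟨l', ⟨hmax', hv'⟩, hmin⟩ :=
    (InvImage.wf (fun l => finrank 𝕜 V - rank l) wellFounded_lt).has_min
      {l | IsMaxOn l s u₀ ∧ l v < l u₀} ⟨l, hmax, hv⟩
  refine ⟨l', hmax', hv', ?_⟩
  by_contra hne
  obtain ⟨l'', hmax'', hv'', hrank⟩ :=
    exists_isMaxOn_finrank_vectorSpan_filter_lt hs hu₀ hmax' hv' (by
      have := hlt l' hv'
      dsimp only [rank] at this hne
      omega)
  exact hmin l'' ⟨hmax'', hv''⟩ (by have := hlt l'' hv''; dsimp only [rank, InvImage] at *; omega)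

end OrderedField

section Normed

variable {V : Type*} [NormedAddCommGroup V] [NormedSpace ℝ V]

theorem convexHull_extremePoints_convexHull_finset (s : Finset V) :
    convexHull ℝ ((convexHull ℝ (s : Set V)).extremePoints ℝ) = convexHull ℝ (s : Set V) := by
  have hclosed : IsClosed (convexHull ℝ ((convexHull ℝ (s : Set V)).extremePoints ℝ)) :=
    ((s.finite_toSet.subset extremePoints_convexHull_subset).isCompact_convexHull ℝ).isClosed
  rw [← hclosed.closure_eq]
  exact closure_convexHull_extremePoints (s.finite_toSet.isCompact_convexHull ℝ)
    (convex_convexHull ℝ _)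

theorem exists_isMaxOn_lt_of_mem_extremePoints {s : Finset V} {v w : V}
    (hv : v ∈ (convexHull ℝ (s : Set V)).extremePoints ℝ) (hw : w ∈ s) (hwv : w ≠ v) :
    ∃ l : V →ₗ[ℝ] ℝ, ∃ u₀ ∈ s, IsMaxOn l s u₀ ∧ l v < l u₀ := by
  have hv' : v ∉ convexHull ℝ (↑s \ {v}) := fun h =>
    ((convex_convexHull ℝ _).mem_extremePoints_iff_mem_sdiff_convexHull_sdiff.1 hv).2
      (convexHull_mono (Set.sdiff_subset_sdiff_left (subset_convexHull ℝ _)) h)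
  obtain ⟨f, a, hfv, hf⟩ := geometric_hahn_banach_point_closed (convex_convexHull ℝ _)
    (s.finite_toSet.sdiff.isCompact_convexHull ℝ).isClosed hv'
  obtain ⟨u₀, hu₀, hmax⟩ := s.exists_max_image f ⟨w, hw⟩
  exact ⟨f, u₀, hu₀, isMaxOn_iff.2 hmax,
    hfv.trans ((hf w (subset_convexHull ℝ _ ⟨hw, hwv⟩)).trans_le (hmax w hw))⟩

variable [FiniteDimensional ℝ V]

theorem isExposed_convexHull_filter {s : Finset V} {l : V →ₗ[ℝ] ℝ} {u₀ : V} (hu₀ : u₀ ∈ s)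
    (hmax : IsMaxOn l s u₀) :
    IsExposed ℝ (convexHull ℝ (s : Set V)) (convexHull ℝ (s.filter (l · = l u₀) : Set V)) := by
  have hle : ∀ x ∈ convexHull ℝ (s : Set V), l x ≤ l u₀ :=
    convexHull_min (isMaxOn_iff.1 hmax) (convex_halfSpace_le l.isLinear _)
  have hu₀' : u₀ ∈ convexHull ℝ (s : Set V) := subset_convexHull ℝ _ hu₀
  have hface : (LinearMap.toContinuousLinearMap l).toExposed (convexHull ℝ (s : Set V)) =
      convexHull ℝ (s.filter (l · = l u₀) : Set V) := by
    rw [← convexHull_inter_eq_convexHull_filter (isMaxOn_iff.1 hmax)]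
    ext x
    simp only [ContinuousLinearMap.toExposed, LinearMap.coe_toContinuousLinearMap',
      Set.mem_inter_iff, Set.mem_ofPred_eq]
    exact and_congr_right fun hx =>
      ⟨fun h => (hle x hx).antisymm (h u₀ hu₀'), fun h y hy => h ▸ hle y hy⟩
  exact hface ▸ ContinuousLinearMap.toExposed.isExposed

theorem exists_isExposed_finrank_notMem_affineSpan {s : Finset V}
    (hs : affineSpan ℝ (s : Set V) = ⊤) {v w : V}
    (hv : v ∈ (convexHull ℝ (s : Set V)).extremePoints ℝ) (hw : w ∈ s) (hwv : w ≠ v) :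
    ∃ F, IsExposed ℝ (convexHull ℝ (s : Set V)) F ∧
      finrank ℝ (vectorSpan ℝ F) + 1 = finrank ℝ V ∧ v ∉ affineSpan ℝ F := by
  obtain ⟨l, u₀, hu₀, hmax, hlv⟩ := exists_isMaxOn_lt_of_mem_extremePoints hv hw hwv
  obtain ⟨l', hmax', hlv', hrank⟩ :=
    Finset.exists_isMaxOn_finrank_vectorSpan_filter_add_one_eq hs hu₀ hmax hlv
  refine ⟨_, isExposed_convexHull_filter hu₀ hmax', by
    rwa [← direction_affineSpan, affineSpan_convexHull, direction_affineSpan], fun h => ?_⟩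
  rw [affineSpan_convexHull] at h
  exact hlv'.ne (l'.toAffineMap.eq_of_mem_affineSpan (fun x hx => (Finset.mem_filter.1 hx).2) h)

theorem notMem_affineSpan_extremePoints_sdiff {s : Finset V} {P : Set V}
    (hP : P = convexHull ℝ (s : Set V)) (hs : affineSpan ℝ (s : Set V) = ⊤)
    (hpyr : ∀ F : Set V, IsExposed ℝ P F → F ≠ P →
      finrank ℝ (vectorSpan ℝ F) + 1 = finrank ℝ V → ∃ p, P.extremePoints ℝ \ F = {p})
    {v : V} (hv : v ∈ P.extremePoints ℝ) : v ∉ affineSpan ℝ (P.extremePoints ℝ \ {v}) := by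
  rcases (P.extremePoints ℝ \ {v}).eq_empty_or_nonempty with hempty | ⟨w, hwE, hwv⟩
  · simp [hempty, AffineSubspace.notMem_bot]
  obtain ⟨F, hFexp, hFrank, hvF⟩ :=
    exists_isExposed_finrank_notMem_affineSpan hs (hP ▸ hv)
      (extremePoints_convexHull_subset (hP ▸ hwE)) hwv
  have hvF' : v ∉ F := fun h => hvF (subset_affineSpan ℝ F h)
  obtain ⟨p, hp⟩ := hpyr F (hP ▸ hFexp) (fun h => hvF' (h ▸ extremePoints_subset hv)) hFrank
  have hother : P.extremePoints ℝ \ {v} ⊆ F := fun x ⟨hxE, hxv⟩ => by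
    by_contra hxF
    have hx : x ∈ ({p} : Set V) := hp ▸ ⟨hxE, hxF⟩
    have hv : v ∈ ({p} : Set V) := hp ▸ ⟨hv, hvF'⟩
    exact hxv (hx.trans hv.symm)
  exact fun h => hvF (affineSpan_mono ℝ hother h)

end Normed

theorem pyramid_over_every_facet_is_simplex_general (n : ℕ)
    (s : Finset (Fin n → ℝ)) (P : Set (Fin n → ℝ))
    (hP : P = convexHull ℝ (s : Set (Fin n → ℝ)))
    (hint : (interior P).Nonempty)
    (hpyr : ∀ F : Set (Fin n → ℝ), IsExposed ℝ P F → F ≠ P →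
      Module.finrank ℝ (vectorSpan ℝ F) = n - 1 →
      ∃ p, Set.extremePoints ℝ P \ F = {p}) :
    ∃ t : Finset (Fin n → ℝ), t.card = n + 1 ∧
      AffineIndependent ℝ (fun p : {x // x ∈ t} => (p : Fin n → ℝ)) ∧
      P = convexHull ℝ (t : Set (Fin n → ℝ)) := by
  have hs : affineSpan ℝ (s : Set (Fin n → ℝ)) = ⊤ :=
    affineSpan_eq_top_of_nonempty_interior (hP ▸ hint)
  obtain ⟨t, ht⟩ : ∃ t : Finset (Fin n → ℝ), (t : Set (Fin n → ℝ)) = P.extremePoints ℝ :=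
    (s.finite_toSet.subset (hP ▸ extremePoints_convexHull_subset)).exists_finset_coe
  have hind : AffineIndependent ℝ ((↑) : ↥(t : Set (Fin n → ℝ)) → Fin n → ℝ) :=
    affineIndependent_of_forall_notMem_affineSpan_sdiff fun v hv => by
      rw [ht] at hv ⊢
      exact notMem_affineSpan_extremePoints_sdiff hP hs
        (fun F hFexp hFP hFrank => hpyr F hFexp hFP (by rw [finrank_fin_fun] at hFrank; omega)) hv
  have hhull : P = convexHull ℝ (t : Set (Fin n → ℝ)) := by
    rw [ht, hP, convexHull_extremePoints_convexHull_finset]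
  have hcard := hind.affineSpan_eq_top_iff_card_eq_finrank_add_one.1
    (by rw [Subtype.range_coe, ← affineSpan_convexHull, ← hhull, hP, affineSpan_convexHull, hs])
  simp only [Finset.coe_sort_coe, Fintype.card_coe, finrank_fin_fun] at hcard
  exact ⟨t, hcard, hind, hhull⟩

/-- A full-dimensional polytope in `ℝⁿ` that is a pyramid over each of its facets
(for every facet `F`, exactly one vertex of `P` lies outside `F`) is a simplex. -/
theorem pyramid_over_every_facet_is_simplex (n : ℕ) (hn : 1 ≤ n)
    (s : Finset (Fin n → ℝ)) (P : Set (Fin n → ℝ))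
    (hP : P = convexHull ℝ (s : Set (Fin n → ℝ)))
    (hint : (interior P).Nonempty)
    (hpyr : ∀ F : Set (Fin n → ℝ), IsExposed ℝ P F → F ≠ P →
      Module.finrank ℝ (vectorSpan ℝ F) = n - 1 →
      ∃ p, Set.extremePoints ℝ P \ F = {p}) :
    ∃ t : Finset (Fin n → ℝ), t.card = n + 1 ∧
      AffineIndependent ℝ (fun p : {x // x ∈ t} => (p : Fin n → ℝ)) ∧
      P = convexHull ℝ (t : Set (Fin n → ℝ)) :=
  pyramid_over_every_facet_is_simplex_general n s P hP hint hpyr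
end

section
/- Let P ⊂ R^n be a centrally symmetric polytope (P = -P) with nonempty interior that is a bipyramid under each of its vertices, i.e., for every vertex v of P there is a hyperplane H_v with v ∉ H_v such that P = conv((P ∩ H_v) ∪ {v, -v}). Then P is a cross-polytope, i.e., P is the convex hull of n pairs ±w_1,...,±w_n of linearly independent vectors. -/
/-!
The vertex set `E` of `P` is finite, centrally symmetric and spanning; pick a basis `w` of `ℝⁿ`
inside it. A vertex `u` of `P` is a vertex of `conv ((P ∩ H_u) ∪ {u, -u})`, so every vertex other
than `±u` lies in the hyperplane `H_u = {f = c}`. If `u` were not among the `±wᵢ`,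
then all `±wᵢ` would lie in `H_u`, forcing `c = 0` and then `f = 0`. Hence `E = {±wᵢ}` and
`P = conv E` is the cross-polytope spanned by `w`.
-/

open Pointwise Module Submodule Set

lemma extremePoints_neg {𝕜 V : Type*} [Ring 𝕜] [PartialOrder 𝕜] [IsOrderedRing 𝕜]
    [AddCommGroup V] [Module 𝕜 V] (A : Set V) :
    (-A).extremePoints 𝕜 = -A.extremePoints 𝕜 := by
  simpa using (image_extremePoints (LinearEquiv.neg 𝕜 (M := V)) A).symm

section KreinMilman

variable {V : Type*} [AddCommGroup V] [Module ℝ V] [TopologicalSpace V] [T2Space V]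
  [IsTopologicalAddGroup V] [ContinuousSMul ℝ V] [LocallyConvexSpace ℝ V]

lemma Set.Finite.convexHull_extremePoints_convexHull {s : Set V} (hs : s.Finite) :
    convexHull ℝ ((convexHull ℝ s).extremePoints ℝ) = convexHull ℝ s := by
  have hfin : ((convexHull ℝ s).extremePoints ℝ).Finite :=
    hs.subset extremePoints_convexHull_subset
  rw [← (hfin.isClosed_convexHull (𝕜 := ℝ)).closure_eq, closure_convexHull_extremePoints
    (hs.isCompact_convexHull (𝕜 := ℝ)) (convex_convexHull ℝ s)]

end KreinMilman

lemma exists_linearIndependent_fin_subset {K V : Type*} [DivisionRing K] [AddCommGroup V]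
    [Module K V] [FiniteDimensional K V] {E : Set V} (hE : span K E = ⊤) {n : ℕ}
    (hn : finrank K V = n) :
    ∃ w : Fin n → V, LinearIndependent K w ∧ span K (range w) = ⊤ ∧ range w ⊆ E := by
  subst hn
  obtain ⟨b, hbE, hb_span, hb_li⟩ := exists_linearIndependent K E
  let B : Basis b K V := .mk hb_li (by simp [hb_span, hE])
  let e := B.indexEquiv (finBasis K V)
  have hrange : range (Subtype.val ∘ e.symm) = b := by
    rw [range_comp, e.symm.range_eq_univ, image_univ, Subtype.range_coe]
  refine ⟨Subtype.val ∘ e.symm, hb_li.comp _ e.symm.injective, ?_, ?_⟩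
  · rw [hrange, hb_span, hE]
  · rw [hrange]; exact hbE

lemma mem_or_neg_mem_of_subset_hyperplane_union {K V : Type*} [Field K] [CharZero K]
    [AddCommGroup V] [Module K V] {E W : Set V} (hE : -E = E) (hW : span K W = ⊤) (hWE : W ⊆ E)
    {f : V →ₗ[K] K} (hf : f ≠ 0) {c : K} {u : V} (hEu : E ⊆ {x | f x = c} ∪ {u, -u}) :
    u ∈ W ∨ -u ∈ W := by
  by_contra! hu
  have hWc : ∀ x, x ∈ W ∨ -x ∈ W → f x = c := by
    intro x hx
    have hxE : x ∈ E := hx.elim (fun h => hWE h) (fun h => hE ▸ hWE h)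
    rcases hEu hxE with hfx | rfl | rfl
    · exact hfx
    · tauto
    · simp only [neg_neg] at hx; tauto
  obtain ⟨w, hw⟩ : W.Nonempty := by
    obtain ⟨x, hx⟩ := DFunLike.ne_iff.1 hf
    have : Nontrivial V := nontrivial_of_ne x 0 fun h => hx (by simp [h])
    rw [nonempty_iff_ne_empty]; rintro rfl; simp at hW
  have hc : c = 0 := by
    have h := hWc (-w) (.inr (by rwa [neg_neg]))
    rw [map_neg, hWc w (.inl hw)] at h
    exact CharZero.neg_eq_self_iff.1 h
  refine hf (LinearMap.ker_eq_top.1 (eq_top_iff.2 (hW ▸ span_le.2 fun x hx => ?_)))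
  exact (hWc x (.inl hx)).trans hc

theorem bipyramid_under_every_vertex_is_crosspolytope_general (n : ℕ)
    (s : Finset (Fin n → ℝ)) (P : Set (Fin n → ℝ))
    (hP : P = convexHull ℝ (s : Set (Fin n → ℝ)))
    (hint : (interior P).Nonempty)
    (hsym : P = -P)
    (hbip : ∀ v ∈ Set.extremePoints ℝ P, ∃ (f : (Fin n → ℝ) →ₗ[ℝ] ℝ) (c : ℝ),
      f ≠ 0 ∧ f v ≠ c ∧ P = convexHull ℝ ((P ∩ {x | f x = c}) ∪ {v, -v})) :
    ∃ w : Fin n → (Fin n → ℝ), LinearIndependent ℝ w ∧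
      P = convexHull ℝ (Set.range w ∪ -(Set.range w)) := by
  have hPE : P = convexHull ℝ (P.extremePoints ℝ) := by
    rw [hP, s.finite_toSet.convexHull_extremePoints_convexHull]
  have hE_neg : -P.extremePoints ℝ = P.extremePoints ℝ := by
    rw [← extremePoints_neg, ← hsym]
  have hE_span : span ℝ (P.extremePoints ℝ) = ⊤ := by
    refine eq_top_of_nonempty_interior' _ (hint.mono (interior_mono ?_))
    exact hPE.trans_subset (convexHull_min subset_span (span ℝ _).convex)
  obtain ⟨w, hw_li, hw_span, hwE⟩ :=
    exists_linearIndependent_fin_subset hE_span (finrank_fin_fun ℝ)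
  refine ⟨w, hw_li, hPE.trans (congrArg _ (Subset.antisymm (fun u hu => ?_) ?_))⟩
  · obtain ⟨f, c, hf, -, hPf⟩ := hbip u hu
    have hEu : P.extremePoints ℝ ⊆ {x | f x = c} ∪ {u, -u} := by
      rw [hPf]
      exact extremePoints_convexHull_subset.trans (union_subset_union_left _ inter_subset_right)
    exact mem_or_neg_mem_of_subset_hyperplane_union hE_neg hw_span hwE hf hEu
  · exact union_subset hwE (hE_neg ▸ neg_subset_neg.2 hwE)

/-- A full-dimensional centrally symmetric polytope in `ℝⁿ` that is a bipyramid under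
each of its vertices is a cross-polytope. -/
theorem bipyramid_under_every_vertex_is_crosspolytope (n : ℕ) (hn : 1 ≤ n)
    (s : Finset (Fin n → ℝ)) (P : Set (Fin n → ℝ))
    (hP : P = convexHull ℝ (s : Set (Fin n → ℝ)))
    (hint : (interior P).Nonempty)
    (hsym : P = -P)
    (hbip : ∀ v ∈ Set.extremePoints ℝ P, ∃ (f : (Fin n → ℝ) →ₗ[ℝ] ℝ) (c : ℝ),
      f ≠ 0 ∧ f v ≠ c ∧ P = convexHull ℝ ((P ∩ {x | f x = c}) ∪ {v, -v})) :
    ∃ w : Fin n → (Fin n → ℝ), LinearIndependent ℝ w ∧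
      P = convexHull ℝ (Set.range w ∪ -(Set.range w)) :=
  bipyramid_under_every_vertex_is_crosspolytope_general n s P hP hint hsym hbip
end

section
/- Every zonotope Z ⊂ R^n with nonempty interior and at most n+1 generators is affinely equivalent to C_n + [-y, y] for some y ∈ [0,1]^n, where C_n = sum of [-e_i, e_i]. -/
open Pointwise Module Submodule Set

/-! Nonempty interior forces the `n + 1` generators to span `ℝⁿ`, so they satisfy a nontrivial
linear relation. Solving it for the generator whose coefficient has the largest absolute value
writes that generator as `∑ λⱼ wⱼ` with `|λⱼ| ≤ 1` in terms of the other `n`, which then form a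
basis. Since `[-w, w] = [w, -w]`, replacing `wⱼ` by `-wⱼ` where `λⱼ < 0` makes all coefficients
`|λⱼ| ∈ [0, 1]`, and the linear map sending `eⱼ` to the (re-signed) `wⱼ`, followed by translation
by the centre, carries `C_n + [-y, y]` onto `Z`. -/

theorem sum_segment_neg_subset_span {𝕜 E ι : Type*} [Ring 𝕜] [PartialOrder 𝕜]
    [AddCommGroup E] [Module 𝕜 E] (s : Finset ι) (z : ι → E) :
    ∑ i ∈ s, segment 𝕜 (-z i) (z i) ⊆ span 𝕜 (range z) := by
  intro x hx
  obtain ⟨g, hg, rfl⟩ := (mem_finsetSum _ _ _).1 hx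
  have hz : ∀ i, z i ∈ span 𝕜 (range z) := fun i => subset_span ⟨i, rfl⟩
  exact sum_mem fun i hi => (span 𝕜 (range z)).convex.segment_subset
    (neg_mem (hz i)) (hz i) (hg hi)

theorem span_range_eq_top_of_nonempty_interior_singleton_add_sum_segment {E ι : Type*}
    [AddCommGroup E] [Module ℝ E] [TopologicalSpace E] [IsTopologicalAddGroup E]
    [ContinuousSMul ℝ E] [Fintype ι] {c : E} {z : ι → E}
    (h : (interior ({c} + ∑ i, segment ℝ (-z i) (z i))).Nonempty) :
    span ℝ (range z) = ⊤ := by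
  rw [singleton_add, ← Homeomorph.coe_addLeft, ← Homeomorph.image_interior, image_nonempty] at h
  exact eq_top_of_nonempty_interior' _ (h.mono (interior_mono (sum_segment_neg_subset_span _ z)))

theorem span_range_comp_succAbove_eq {R M : Type*} [Semiring R] [AddCommMonoid M] [Module R M]
    {n : ℕ} {z : Fin (n + 1) → M} {k : Fin (n + 1)}
    (hk : z k ∈ span R (range (z ∘ k.succAbove))) :
    span R (range (z ∘ k.succAbove)) = span R (range z) := by
  refine le_antisymm (span_mono (range_comp_subset_range _ _)) (span_le.2 ?_)
  rintro _ ⟨i, rfl⟩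
  obtain rfl | ⟨j, rfl⟩ := k.eq_self_or_eq_succAbove i
  · exact hk
  · exact subset_span ⟨j, rfl⟩

theorem exists_eq_sum_smul_succAbove_of_not_linearIndependent {𝕜 E : Type*} [Field 𝕜]
    [LinearOrder 𝕜] [IsStrictOrderedRing 𝕜] [AddCommGroup E] [Module 𝕜 E]
    {n : ℕ} {z : Fin (n + 1) → E} (h : ¬ LinearIndependent 𝕜 z) :
    ∃ k, ∃ lam : Fin n → 𝕜, (∀ j, |lam j| ≤ 1) ∧ z k = ∑ j, lam j • z (k.succAbove j) := by
  obtain ⟨g, hg, i, hi⟩ := Fintype.not_linearIndependent_iff.1 h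
  obtain ⟨k, hk⟩ := Finite.exists_max fun i => |g i|
  have hgk : g k ≠ 0 := by
    intro h0
    have := hk i
    rw [h0, abs_zero] at this
    exact hi (abs_nonpos_iff.1 this)
  refine ⟨k, fun j => -g (k.succAbove j) / g k, fun j => ?_, ?_⟩
  · rw [abs_div, abs_neg, div_le_one (abs_pos.2 hgk)]
    exact hk _
  · rw [Fin.sum_univ_succAbove _ k, ← eq_neg_iff_add_eq_zero] at hg
    apply smul_right_injective E hgk
    simp only [hg, Finset.smul_sum, smul_smul, ← Finset.sum_neg_distrib, mul_div_cancel₀ _ hgk,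
      neg_smul]

theorem Module.Basis.exists_segment_eq_and_abs_smul_eq {𝕜 E ι : Type*} [Field 𝕜]
    [LinearOrder 𝕜] [IsStrictOrderedRing 𝕜] [AddCommGroup E] [Module 𝕜 E]
    (w : Basis ι 𝕜 E) (lam : ι → 𝕜) :
    ∃ B : Basis ι 𝕜 E, ∀ i, segment 𝕜 (-B i) (B i) = segment 𝕜 (-w i) (w i) ∧
      |lam i| • B i = lam i • w i := by
  refine ⟨w.unitsSMul fun i => if 0 ≤ lam i then 1 else -1, fun i => ?_⟩
  rw [Basis.unitsSMul_apply]
  split_ifs with h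
  · simp [abs_of_nonneg h]
  · simpa [abs_of_neg (not_le.1 h)] using segment_symm 𝕜 (w i) (-w i)

theorem image_segment_neg {𝕜 E F G : Type*} [Ring 𝕜] [PartialOrder 𝕜] [IsOrderedRing 𝕜]
    [AddCommGroup E] [Module 𝕜 E] [AddCommGroup F] [Module 𝕜 F] [FunLike G E F]
    [LinearMapClass G 𝕜 E F] (f : G) (v : E) :
    f '' segment 𝕜 (-v) v = segment 𝕜 (-f v) (f v) := by
  simpa using image_segment 𝕜 (f : E →ₗ[𝕜] F).toAffineMap (-v) v

theorem Module.Basis.equivFun_symm_image_sum_segment_add_segment {𝕜 E ι : Type*} [Field 𝕜]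
    [PartialOrder 𝕜] [IsOrderedRing 𝕜] [AddCommGroup E] [Module 𝕜 E] [Fintype ι] [DecidableEq ι]
    (B : Basis ι 𝕜 E) (y : ι → 𝕜) :
    B.equivFun.symm '' ((∑ i, segment 𝕜 (-Pi.single i 1) (Pi.single i 1)) + segment 𝕜 (-y) y) =
      (∑ i, segment 𝕜 (-B i) (B i)) + segment 𝕜 (-∑ i, y i • B i) (∑ i, y i • B i) := by
  rw [image_add, image_finsetSum]
  simp only [image_segment_neg, Basis.equivFun_symm_single]
  rw [Basis.equivFun_symm_apply]

theorem zonotope_n_add_one_generators_normal_form_general (n : ℕ)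
    (c : Fin n → ℝ) (z : Fin (n + 1) → Fin n → ℝ)
    (Z : Set (Fin n → ℝ))
    (hZ : Z = {c} + ∑ i : Fin (n + 1), segment ℝ (-(z i)) (z i))
    (hint : (interior Z).Nonempty) :
    ∃ y : Fin n → ℝ, (∀ i, y i ∈ Set.Icc (0 : ℝ) 1) ∧
      ∃ f : (Fin n → ℝ) ≃ᵃ[ℝ] (Fin n → ℝ),
        f '' ((∑ i : Fin n, segment ℝ (-(Pi.single i 1)) (Pi.single i 1)) +
          segment ℝ (-y) y) = Z := by
  have hspan := span_range_eq_top_of_nonempty_interior_singleton_add_sum_segment (hZ ▸ hint)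
  have hdep : ¬ LinearIndependent ℝ z := fun hz => by
    simpa using hz.fintype_card_le_finrank
  obtain ⟨k, lam, hlam, hzk⟩ := exists_eq_sum_smul_succAbove_of_not_linearIndependent hdep
  have hzk_mem : z k ∈ span ℝ (range (z ∘ k.succAbove)) :=
    hzk ▸ sum_mem fun j _ => smul_mem _ _ (subset_span ⟨j, rfl⟩)
  have hw : span ℝ (range (z ∘ k.succAbove)) = ⊤ :=
    (span_range_comp_succAbove_eq hzk_mem).trans hspan
  obtain ⟨B, hB⟩ :=
    (basisOfTopLeSpanOfCardEqFinrank _ hw.ge (by simp)).exists_segment_eq_and_abs_smul_eq lam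
  refine ⟨fun j => |lam j|, fun j => ⟨abs_nonneg _, hlam j⟩,
    B.equivFun.symm.toAffineEquiv.trans (AffineEquiv.constVAdd ℝ _ c), ?_⟩
  rw [AffineEquiv.coe_trans, image_comp, LinearEquiv.coe_toAffineEquiv,
    B.equivFun_symm_image_sum_segment_add_segment, hZ, Fin.sum_univ_succAbove _ k, singleton_add]
  simp [hB, hzk, add_comm]

/-- Every full-dimensional zonotope `Z ⊂ ℝⁿ` with at most `n+1` generators is affinely
equivalent to `C_n + [-y, y]` for some `y ∈ [0,1]ⁿ`, where `C_n = ∑ [-eᵢ, eᵢ]`. -/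
theorem zonotope_n_add_one_generators_normal_form (n : ℕ) (hn : 1 ≤ n)
    (c : Fin n → ℝ) (z : Fin (n + 1) → Fin n → ℝ)
    (Z : Set (Fin n → ℝ))
    (hZ : Z = {c} + ∑ i : Fin (n + 1), segment ℝ (-(z i)) (z i))
    (hint : (interior Z).Nonempty) :
    ∃ y : Fin n → ℝ, (∀ i, y i ∈ Set.Icc (0 : ℝ) 1) ∧
      ∃ f : (Fin n → ℝ) ≃ᵃ[ℝ] (Fin n → ℝ),
        f '' ((∑ i : Fin n, segment ℝ (-(Pi.single i 1)) (Pi.single i 1)) +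
          segment ℝ (-y) y) = Z :=
  zonotope_n_add_one_generators_normal_form_general n c z Z hZ hint
end
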